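/- P_0(n) admits the product decomposition P_0(n) = R_n · R_{n−1} · ⋯ · R_3 · R_2 · R_1 for all n ≥ 1, where R_k := ρ^k(0) and P_0(n) := R_{n+1}[:−2]. -/

import Mathlib

def rho (w : List ℕ) : List ℕ := w.flatMap (fun n => [0, n + 1])

def R (n : ℕ) : List ℕ := rho^[n] [0]

def P0 (n : ℕ) : List ℕ := (R (n + 1)).dropLast.dropLast

/-!
Since `ρ` is a monoid morphism of the free monoid, `R (n + 1) = ρ (R n)` always ends in `[0, n + 1]`;
stripping that suffix gives `P0 (n + 1) = ρ (P0 n) ++ R 1`. Induction then pushes `ρ` through the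
product `R n ⋯ R 1`, turning it into `R (n + 1) ⋯ R 2`, and appending `R 1` completes the product.
-/

theorem List.dropLast_dropLast_append_pair {α : Type*} (w : List α) (a b : α) :
    (w ++ [a, b]).dropLast.dropLast = w := by
  simp

lemma rho_append (u v : List ℕ) : rho (u ++ v) = rho u ++ rho v :=
  List.flatMap_append

lemma rho_flatten (L : List (List ℕ)) : rho L.flatten = (L.map rho).flatten := by
  induction L with
  | nil => rfl
  | cons w L ih => rw [List.flatten_cons, rho_append, ih]; rfl

lemma R_succ (n : ℕ) : R (n + 1) = rho (R n) :=
  Function.iterate_succ_apply' rho n [0]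

lemma R_succ_eq_append_pair (n : ℕ) : ∃ w, R (n + 1) = w ++ [0, n + 1] := by
  induction n with
  | zero => exact ⟨[], rfl⟩
  | succ n ih =>
    obtain ⟨w, hw⟩ := ih
    refine ⟨rho w ++ [0, 1], ?_⟩
    rw [R_succ, hw, rho_append]
    simp [rho]

lemma R_succ_eq_P0_append (n : ℕ) : R (n + 1) = P0 n ++ [0, n + 1] := by
  obtain ⟨w, hw⟩ := R_succ_eq_append_pair n
  rw [P0, hw, List.dropLast_dropLast_append_pair]

lemma P0_succ (n : ℕ) : P0 (n + 1) = rho (P0 n) ++ R 1 := by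
  have h : R (n + 2) = (rho (P0 n) ++ R 1) ++ [0, n + 2] := by
    rw [R_succ, R_succ_eq_P0_append, rho_append]
    simp [rho, R]
  rw [P0, h, List.dropLast_dropLast_append_pair]

theorem P0_product_general (n : ℕ) :
    P0 n = ((List.range n).map (fun i => R (n - i))).flatten := by
  induction n with
  | zero => rfl
  | succ n ih =>
    have shift : (List.range n).map (rho ∘ fun i => R (n - i))
        = (List.range n).map (fun i => R (n + 1 - i)) :=
      List.map_congr_left fun i hi => by
        rw [Function.comp_apply, ← R_succ, Nat.sub_add_comm (List.mem_range.mp hi).le]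
    rw [P0_succ, ih, rho_flatten, List.map_map, shift, List.range_succ, List.map_append,
      List.flatten_append]
    simp

/-- For all n ≥ 1, P₀(n) = R_n · R_{n−1} · ⋯ · R_2 · R_1. -/
theorem P0_product (n : ℕ) (hn : 1 ≤ n) :
    P0 n = ((List.range n).map (fun i => R (n - i))).flatten :=
  P0_product_general n
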